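/- Let (X, ι_X, L_X) be a Bachmann-Howard system for a prae-dilator T and ϑ_X : T_X → ϑ_T(X) the map σ ↦ ϑσ. Then for every σ ∈ T_X we have [ι_X]^{<ω}(supp^T_X(σ)) <^fin_{ϑ_T(X)} ϑ_X(σ), i.e., ι_X(x) <_{ϑ_T(X)} ϑσ for every x ∈ supp^T_X(σ). -/

import Mathlib

/-! Data for a Bachmann-Howard system: `X` is a linear order, `S` is the linear order
`T_X` (the value of a prae-dilator at `X`), whose elements `σ` simultaneously index the
terms `ϑσ` making up the set `ϑ_T(X)`.  So `supp : S → Finset X` is the support function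
`supp^T_X`, `ι : X → S` is the function `ι_X : X → ϑ_T(X)` (identifying terms with their
indices), and `L : X → ℕ` is the length function `L_X`. -/
structure BHData (X S : Type) [LinearOrder X] [LinearOrder S] where
  supp : S → Finset X
  ι : X → S
  L : X → ℕ

variable {X S : Type} [LinearOrder X] [LinearOrder S]

/-- The induced length function `L_{ϑ_T(X)}(ϑσ) = max{L_X(x) | x ∈ supp σ} + 1`
(with the maximum over the empty set being `0`). -/
def BHData.Lv (D : BHData X S) (σ : S) : ℕ := (D.supp σ).sup D.L + 1

/-- `(X, ι, L)` is a Bachmann-Howard system: `L_{ϑ_T(X)} ∘ ι_X = L_X`. -/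
def BHData.IsBH (D : BHData X S) : Prop := ∀ x : X, D.Lv (D.ι x) = D.L x

/-- The recursively defined relation `ϑσ <_{ϑ_T(X)} ϑτ`: either
(i) `σ <_{T_X} τ` and `ι_X(x) < ϑτ` for all `x ∈ supp σ`, or
(ii) `τ <_{T_X} σ` and `ϑσ ≤ ι_X(x)` for some `x ∈ supp τ`
(the clause (ii) is split according to `ϑσ < ι_X(x)` or `ϑσ = ι_X(x)`).
For a Bachmann-Howard system this least fixed point satisfies the defining
recursion, which is well-founded along `Lv`. -/
inductive BHData.lt (D : BHData X S) : S → S → Prop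
  | left {σ τ : S} : σ < τ → (∀ x ∈ D.supp σ, D.lt (D.ι x) τ) → D.lt σ τ
  | right_lt {σ τ : S} (x : X) : τ < σ → x ∈ D.supp τ → D.lt σ (D.ι x) → D.lt σ τ
  | right_eq {σ τ : S} (x : X) : τ < σ → x ∈ D.supp τ → σ = D.ι x → D.lt σ τ

/-! Clause (i) for `ι x < ϑσ` asks for `ι z < ϑσ` with `z ∈ supp (ι x)`, so the claim is
strengthened to all `x` in the hereditary support of `σ`. This is proved by induction on
`L x + Lv σ`: the left clause passes to `z ∈ supp (ι x)`, of smaller length, the right clause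
to `ι y` with `y ∈ supp σ`, of smaller `Lv`; and `ι x = σ` is excluded since
`L x < Lv σ = Lv (ι x) = L x`. -/

namespace BHData

variable {D : BHData X S}

inductive HerSupp (D : BHData X S) (x : X) : S → Prop
  | of_mem {σ : S} : x ∈ D.supp σ → D.HerSupp x σ
  | of_mem_ι {y : X} {σ : S} : D.HerSupp x (D.ι y) → y ∈ D.supp σ → D.HerSupp x σ

theorem HerSupp.of_mem_supp_ι {x z : X} {σ : S} (h : D.HerSupp x σ)
    (hz : z ∈ D.supp (D.ι x)) : D.HerSupp z σ := by
  induction h with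
  | of_mem hx => exact .of_mem_ι (.of_mem hz) hx
  | of_mem_ι _ hy ih => exact .of_mem_ι ih hy

theorem L_lt_Lv_of_mem {x : X} {σ : S} (hx : x ∈ D.supp σ) : D.L x < D.Lv σ :=
  Nat.lt_succ_of_le (Finset.le_sup hx)

theorem L_lt_L_of_mem_supp_ι (hD : D.IsBH) {x y : X} (hx : x ∈ D.supp (D.ι y)) :
    D.L x < D.L y :=
  hD y ▸ L_lt_Lv_of_mem hx

theorem HerSupp.L_lt_Lv (hD : D.IsBH) {x : X} {σ : S} (h : D.HerSupp x σ) :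
    D.L x < D.Lv σ := by
  induction h with
  | of_mem hx => exact L_lt_Lv_of_mem hx
  | @of_mem_ι y σ _ hy ih =>
    calc D.L x < D.Lv (D.ι y) := ih
      _ = D.L y := hD y
      _ < D.Lv σ := L_lt_Lv_of_mem hy

theorem HerSupp.ι_ne (hD : D.IsBH) {x : X} {σ : S} (h : D.HerSupp x σ) : D.ι x ≠ σ := by
  rintro rfl
  exact (h.L_lt_Lv hD).ne (hD x).symm

theorem HerSupp.lt_collapse (hD : D.IsBH) {x : X} {σ : S} (h : D.HerSupp x σ) :
    D.lt (D.ι x) σ := by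
  rcases lt_trichotomy (D.ι x) σ with hlt | heq | hgt
  · refine .left hlt fun z hz => ?_
    have := L_lt_L_of_mem_supp_ι hD hz
    exact (h.of_mem_supp_ι hz).lt_collapse hD
  · exact absurd heq (h.ι_ne hD)
  · cases h with
    | of_mem hx => exact .right_eq x hgt hx rfl
    | @of_mem_ι y _ h hy =>
      have : D.Lv (D.ι y) < D.Lv σ := hD y ▸ L_lt_Lv_of_mem hy
      exact .right_lt y hgt hy (h.lt_collapse hD)
termination_by D.L x + D.Lv σ

end BHData

/-- `[ι_X]^{<ω}(supp σ) <^fin ϑσ`: every `ι_X(x)` with `x ∈ supp σ` lies strictly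
below `ϑσ` in the collapse order. -/
theorem BHData.supp_lt_collapse (D : BHData X S) (hD : D.IsBH) :
    ∀ σ : S, ∀ x ∈ D.supp σ, D.lt (D.ι x) σ :=
  fun _ _ hx => (HerSupp.of_mem hx).lt_collapse hD
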